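/- Fix an integer p ≥ 3 and let λ = 2cos(π/p). Let α = (3λ + √(λ² + 4))/2 and let (r_j) and (α_j) be the partial quotients and complete quotients produced by the λ-continued-fraction algorithm applied to α. Then r_0 = 3, r_j = 1 for 1 ≤ j ≤ p−3, and α_{p−2} = α; that is, α has the purely periodic λ-continued fraction with period (3,1,…,1) containing p−3 ones, exhibiting the maximal allowed run of consecutive ones. -/

import Mathlib

open Real Matrix Filter

noncomputable section

/-- `λ_p = 2 cos (π / p)`, the minimal translation length of the Hecke group `G_p`. -/
def heckeLambda (p : ℕ) : ℝ := 2 * Real.cos (Real.pi / p)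

/-- The matrix `S = [[1, λ], [0, 1]]`. -/
def Smat (l : ℝ) : Matrix (Fin 2) (Fin 2) ℝ := !![1, l; 0, 1]

/-- The matrix `T = [[0, -1], [1, 0]]`. -/
def Tmat : Matrix (Fin 2) (Fin 2) ℝ := !![0, -1; 1, 0]

/-- The matrix `U = S * T = [[λ, -1], [1, 0]]`. -/
def Umat (l : ℝ) : Matrix (Fin 2) (Fin 2) ℝ := !![l, -1; 1, 0]

/-- The matrix `S^r = [[1, rλ], [0, 1]]` for an integer exponent `r`. -/
def SmatZ (l : ℝ) (r : ℤ) : Matrix (Fin 2) (Fin 2) ℝ := !![1, (r : ℝ) * l; 0, 1]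

/-- Möbius (linear fractional) action of a `2 × 2` real matrix on a real number. -/
def mobius (M : Matrix (Fin 2) (Fin 2) ℝ) (x : ℝ) : ℝ :=
  (M 0 0 * x + M 0 1) / (M 1 0 * x + M 1 1)

/-- `U^k(0)`, the image of `0` under `k` iterations of the linear fractional
transformation `U : x ↦ λ - 1/x`; as a ratio of entries of the matrix power `U^k`. -/
def Uorbit (l : ℝ) (k : ℕ) : ℝ := ((Umat l) ^ k) 0 1 / ((Umat l) ^ k) 1 1

/-- The complete quotients `α_j` of the (negative) `λ`-continued fraction algorithm:
`α_0 = α`, `α_{j+1} = 1 / (r_j λ - α_j)` with `r_j = ⌊α_j / λ⌋ + 1`. -/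
def cq (l α : ℝ) : ℕ → ℝ
  | 0 => α
  | j + 1 => 1 / (((⌊cq l α j / l⌋ : ℝ) + 1) * l - cq l α j)

/-- The partial quotients `r_j = ⌊α_j / λ⌋ + 1` of the `λ`-continued fraction of `α`. -/
def pq (l α : ℝ) (j : ℕ) : ℤ := ⌊cq l α j / l⌋ + 1

/-- `S` as an element of `SL(2, ℝ)`. -/
def Sgen (l : ℝ) : Matrix.SpecialLinearGroup (Fin 2) ℝ :=
  ⟨!![1, l; 0, 1], by norm_num [Matrix.det_fin_two_of]⟩

/-- `T` as an element of `SL(2, ℝ)`. -/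
def Tgen : Matrix.SpecialLinearGroup (Fin 2) ℝ :=
  ⟨!![0, -1; 1, 0], by norm_num [Matrix.det_fin_two_of]⟩

/-- The Hecke group `G_p`, the subgroup of `SL(2, ℝ)` generated by `S` and `T`. -/
def heckeGroup (l : ℝ) : Subgroup (Matrix.SpecialLinearGroup (Fin 2) ℝ) :=
  Subgroup.closure {Sgen l, Tgen}

/-- `M = [[a, b], [c, d]]` fixes `α` as a linear fractional transformation, i.e.
`α` is a root of `c x² + (d - a) x - b = 0`. -/
def fixesQuad (M : Matrix.SpecialLinearGroup (Fin 2) ℝ) (α : ℝ) : Prop :=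
  M.1 1 0 * α ^ 2 + (M.1 1 1 - M.1 0 0) * α - M.1 0 1 = 0

/-- `α` is a hyperbolic fixed point of the Hecke group `G(λ)`. -/
def IsHypFixedPt (l α : ℝ) : Prop :=
  ∃ M ∈ heckeGroup l, 2 < |M.1 0 0 + M.1 1 1| ∧ fixesQuad M α

/-- `α` is a hyperbolic fixed point of `G(λ)` with Hecke conjugate `α'`
(the other root of the fixed-point quadratic). -/
def IsHypPair (l α α' : ℝ) : Prop :=
  ∃ M ∈ heckeGroup l, 2 < |M.1 0 0 + M.1 1 1| ∧ fixesQuad M α ∧ fixesQuad M α' ∧ α' ≠ α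

/-- A hyperbolic fixed point is `G_p`-reduced when its complete-quotient sequence is
purely periodic. -/
def GpReduced (l β : ℝ) : Prop :=
  IsHypFixedPt l β ∧ ∃ m, 1 ≤ m ∧ cq l β m = β

/-- The map `Φ_p : [0, ∞) → [0, ∞)`: `Φ_p(x) = T U^i (x)` when
`U^{p-i+1}(0) ≤ x < U^{p-i}(0)` for the (unique) `i` with `1 ≤ i ≤ p - 2`,
and `Φ_p(x) = x - λ` when `x ≥ λ`. -/
def Phi (p : ℕ) (l : ℝ) (x : ℝ) : ℝ :=
  @dite ℝ (∃ i : ℕ, 1 ≤ i ∧ i ≤ p - 2 ∧ Uorbit l (p - i + 1) ≤ x ∧ x < Uorbit l (p - i))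
    (Classical.propDecidable _)
    (fun h => mobius (Tmat * (Umat l) ^ h.choose) x)
    (fun _ => x - l)

/-- `C_{n-j, n}`: the partial convergents computed by downward recursion,
`C_{n,n} = r_n λ` and `C_{m,n} = r_m λ - 1 / C_{m+1,n}`. -/
def convAux (l α : ℝ) (n : ℕ) : ℕ → ℝ
  | 0 => (pq l α n : ℝ) * l
  | j + 1 => (pq l α (n - (j + 1)) : ℝ) * l - 1 / convAux l α n j

/-- The `n`-th convergent `C_n = C_{0,n}` of the `λ`-continued fraction of `α`. -/
def conv (l α : ℝ) (n : ℕ) : ℝ := convAux l α n n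

/-- The word `S^{r_0} T S^{r_1} T ⋯ S^{r_n} T`. -/
def cfWord (l : ℝ) (r : ℕ → ℤ) (n : ℕ) : Matrix (Fin 2) (Fin 2) ℝ :=
  ((List.range (n + 1)).map fun j => SmatZ l (r j) * Tmat).prod


/-! After the first step (`r₀ = 3`, `α₁ = 1 / (3λ - α)`) the algorithm applies `x ↦ 1 / (λ - x)`
as long as the complete quotients stay in `[0, λ)`. Writing `α_{n+1} = x_n / x_{n+1}`, the
denominators solve `x_{n+2} = λ x_{n+1} - x_n`, so they are combinations of the rescaled Chebyshev
values `S_n(λ) = sin ((n + 1) π / p) / sin (π / p)`. These are positive for `0 ≤ n ≤ p - 2`, so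
by `S_{N-1} x_j = S_{N-j-1} x_0 + S_{j-1} x_N` positivity of `x_0` and `x_{p-2}` propagates to
every `x_n` with `n ≤ p - 2`, which forces `r_j = 1`; and `S_{p-1}(λ) = 0`, `S_{p-2}(λ) = 1` give
`x_{p-3} = α x_{p-2}` because `α² - 3λα + 2λ² - 1 = 0`. -/

section ContinuedFraction

variable {l α : ℝ}

@[simp]
theorem cq_zero (l α : ℝ) : cq l α 0 = α := rfl

theorem cq_succ (l α : ℝ) (j : ℕ) : cq l α (j + 1) = 1 / (pq l α j * l - cq l α j) := by
  simp only [cq, pq, Int.cast_add, Int.cast_one]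

theorem pq_eq_of_mem_Ico (hl : 0 < l) {j : ℕ} {r : ℤ}
    (h : cq l α j ∈ Set.Ico ((r - 1) * l) (r * l)) : pq l α j = r := by
  have hfloor : ⌊cq l α j / l⌋ = r - 1 := by
    rw [Int.floor_eq_iff, le_div_iff₀ hl, div_lt_iff₀ hl]
    push_cast
    constructor <;> linarith [h.1, h.2]
  simp [pq, hfloor]

theorem pq_eq_one_and_cq_succ_of_eq_div (hl : 0 < l) {j : ℕ} {y z : ℝ} (hy : 0 ≤ y)
    (hz : 0 < z) (hyz : y < l * z) (h : cq l α j = y / z) :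
    pq l α j = 1 ∧ cq l α (j + 1) = z / (l * z - y) := by
  have hpq : pq l α j = 1 := by
    refine pq_eq_of_mem_Ico hl ⟨?_, ?_⟩
    · rw [h, Int.cast_one, sub_self, zero_mul]; positivity
    · rw [h, div_lt_iff₀ hz]; push_cast; linarith
  refine ⟨hpq, ?_⟩
  rw [cq_succ, hpq, h]
  have hw : l * z - y ≠ 0 := by linarith
  push_cast
  field_simp

variable {x : ℕ → ℝ} (hl : 0 < l) (hx : ∀ n, x (n + 2) = l * x (n + 1) - x n) {k N : ℕ}
  (hpos : ∀ n ≤ N, 0 < x n) (hk : cq l α k = x 0 / x 1)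
include hl hx hpos hk

theorem cq_add_eq_div_of_recurrence : ∀ n, n + 1 ≤ N → cq l α (k + n) = x n / x (n + 1)
  | 0, _ => hk
  | n + 1, hn => by
    have step := pq_eq_one_and_cq_succ_of_eq_div hl (hpos n (by omega)).le
      (hpos (n + 1) (by omega)) (by linarith [hx n, hpos (n + 2) hn])
      (cq_add_eq_div_of_recurrence n (by omega))
    rw [← add_assoc, step.2, hx]

theorem pq_add_eq_one_of_recurrence (n : ℕ) (hn : n + 2 ≤ N) : pq l α (k + n) = 1 :=
  (pq_eq_one_and_cq_succ_of_eq_div hl (hpos n (by omega)).le (hpos (n + 1) (by omega))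
    (by linarith [hx n, hpos (n + 2) hn])
    (cq_add_eq_div_of_recurrence hl hx hpos hk n (by omega))).1

end ContinuedFraction

section Chebyshev

open Polynomial Polynomial.Chebyshev

variable {l : ℝ} {x : ℕ → ℝ}

theorem S_eval_add_two (l : ℝ) (n : ℤ) :
    (S ℝ (n + 2)).eval l = l * (S ℝ (n + 1)).eval l - (S ℝ n).eval l := by
  simp [S_add_two]

theorem recurrence_eq_S_eval (hx : ∀ n, x (n + 2) = l * x (n + 1) - x n) (n : ℕ) :
    x n = (S ℝ (n - 1)).eval l * x 1 - (S ℝ (n - 2)).eval l * x 0 := by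
  induction n using Nat.twoStepInduction with
  | zero => simp
  | one => simp
  | more n ih₀ ih₁ =>
    rw [hx, ih₀, ih₁]
    push_cast
    have h₁ := S_eval_add_two l ((n : ℤ) - 1)
    have h₂ := S_eval_add_two l ((n : ℤ) - 2)
    ring_nf at h₁ h₂ ⊢
    linear_combination x 0 * h₂ - x 1 * h₁

theorem S_eval_mul_recurrence (hx : ∀ n, x (n + 2) = l * x (n + 1) - x n) (j N : ℕ) :
    (S ℝ (N - 1)).eval l * x j = (S ℝ (N - j - 1)).eval l * x 0 + (S ℝ (j - 1)).eval l * x N := by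
  induction N using Nat.twoStepInduction with
  | zero => simp [S_neg_sub_one]
  | one =>
    rw [recurrence_eq_S_eval hx j]
    simp only [Nat.cast_one, sub_self, S_zero, eval_one, one_mul, sub_sub_cancel_left, S_neg,
      eval_neg]
    ring_nf
  | more N ih₀ ih₁ =>
    rw [hx]
    push_cast at ih₁ ⊢
    have h₁ := S_eval_add_two l ((N : ℤ) - 1)
    have h₂ := S_eval_add_two l ((N : ℤ) - j - 1)
    ring_nf at h₁ h₂ ih₀ ih₁ ⊢
    linear_combination l * ih₁ - ih₀ + x j * h₁ - x 0 * h₂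

end Chebyshev

section HeckeLambda

open Polynomial Polynomial.Chebyshev

variable {p : ℕ}

theorem one_le_heckeLambda (hp : 3 ≤ p) : 1 ≤ heckeLambda p := by
  have hp' : (3 : ℝ) ≤ p := by exact_mod_cast hp
  have hcos : cos (π / 3) ≤ cos (π / p) :=
    cos_le_cos_of_nonneg_of_le_pi (by positivity) (by linarith [pi_pos])
      (div_le_div_of_nonneg_left pi_pos.le (by norm_num) hp')
  rw [cos_pi_div_three] at hcos
  unfold heckeLambda
  linarith

theorem sin_pi_div_pos (hp : 2 ≤ p) : 0 < sin (π / p) := by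
  have hp' : (2 : ℝ) ≤ p := by exact_mod_cast hp
  apply sin_pos_of_pos_of_lt_pi (by positivity)
  rw [div_lt_iff₀ (by positivity)]
  nlinarith [pi_pos]

theorem S_eval_heckeLambda_mul_sin (p : ℕ) (n : ℤ) :
    (S ℝ n).eval (heckeLambda p) * sin (π / p) = sin ((n + 1) * (π / p)) :=
  S_two_mul_real_cos _ _

theorem S_eval_heckeLambda_pos {n : ℤ} (h0 : 0 ≤ n) (hn : n ≤ p - 2) :
    0 < (S ℝ n).eval (heckeLambda p) := by
  have hp : 2 ≤ p := by omega
  have hp' : (2 : ℝ) ≤ p := by exact_mod_cast hp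
  have hn' : (n : ℝ) + 1 < p := by exact_mod_cast (by omega : n + 1 < p)
  have hsin : 0 < sin ((n + 1) * (π / p)) := by
    apply sin_pos_of_pos_of_lt_pi
    · have : (0 : ℝ) ≤ n := by exact_mod_cast h0
      positivity
    · rw [← mul_div_assoc, div_lt_iff₀ (by positivity)]
      nlinarith [pi_pos]
  rw [← S_eval_heckeLambda_mul_sin] at hsin
  exact (mul_pos_iff_of_pos_right (sin_pi_div_pos hp)).1 hsin

theorem S_eval_heckeLambda_nonneg {n : ℤ} (h0 : -1 ≤ n) (hn : n ≤ p - 2) :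
    0 ≤ (S ℝ n).eval (heckeLambda p) := by
  rcases h0.eq_or_lt with rfl | h0
  · simp
  · exact (S_eval_heckeLambda_pos (by omega) hn).le

theorem S_eval_heckeLambda_sub_one (hp : 2 ≤ p) : (S ℝ (p - 1)).eval (heckeLambda p) = 0 := by
  have h := S_eval_heckeLambda_mul_sin p (p - 1)
  rw [Int.cast_sub, Int.cast_natCast, Int.cast_one, sub_add_cancel,
    mul_div_cancel₀ _ (by positivity), sin_pi] at h
  exact (mul_eq_zero_iff_right (sin_pi_div_pos hp).ne').1 h

theorem S_eval_heckeLambda_sub_two (hp : 2 ≤ p) : (S ℝ (p - 2)).eval (heckeLambda p) = 1 := by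
  have h := S_eval_heckeLambda_mul_sin p (p - 2)
  rw [show ((p - 2 : ℤ) + 1 : ℝ) * (π / p) = π - π / p by field_simp; push_cast; ring,
    sin_pi_sub] at h
  exact (mul_eq_right₀ (sin_pi_div_pos hp).ne').1 h

theorem S_eval_heckeLambda_sub_three (hp : 2 ≤ p) :
    (S ℝ (p - 3)).eval (heckeLambda p) = heckeLambda p := by
  have h := S_eval_add_two (heckeLambda p) (p - 3)
  rw [show (p - 3 + 2 : ℤ) = p - 1 by ring, show (p - 3 + 1 : ℤ) = p - 2 by ring,
    S_eval_heckeLambda_sub_one hp, S_eval_heckeLambda_sub_two hp] at h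
  linarith

theorem S_eval_heckeLambda_sub_four (hp : 2 ≤ p) :
    (S ℝ (p - 4)).eval (heckeLambda p) = heckeLambda p ^ 2 - 1 := by
  have h := S_eval_add_two (heckeLambda p) (p - 4)
  rw [show (p - 4 + 2 : ℤ) = p - 2 by ring, show (p - 4 + 1 : ℤ) = p - 3 by ring,
    S_eval_heckeLambda_sub_two hp, S_eval_heckeLambda_sub_three hp] at h
  linear_combination h

theorem S_eval_heckeLambda_sub_five (hp : 2 ≤ p) :
    (S ℝ (p - 5)).eval (heckeLambda p) = heckeLambda p ^ 3 - 2 * heckeLambda p := by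
  have h := S_eval_add_two (heckeLambda p) (p - 5)
  rw [show (p - 5 + 2 : ℤ) = p - 3 by ring, show (p - 5 + 1 : ℤ) = p - 4 by ring,
    S_eval_heckeLambda_sub_three hp, S_eval_heckeLambda_sub_four hp] at h
  linear_combination h

theorem recurrence_pos_of_heckeLambda {x : ℕ → ℝ}
    (hx : ∀ n, x (n + 2) = heckeLambda p * x (n + 1) - x n) {N : ℕ} (hN : N ≤ p - 2)
    (h0 : 0 < x 0) (hxN : 0 < x N) : ∀ j ≤ N, 0 < x j := by
  intro j hj
  rcases j.eq_zero_or_pos with rfl | hj0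
  · exact h0
  have hsN : 0 < (S ℝ (N - 1)).eval (heckeLambda p) := S_eval_heckeLambda_pos (by omega) (by omega)
  have hsj : 0 < (S ℝ (j - 1)).eval (heckeLambda p) := S_eval_heckeLambda_pos (by omega) (by omega)
  have hsNj : 0 ≤ (S ℝ (N - j - 1)).eval (heckeLambda p) :=
    S_eval_heckeLambda_nonneg (by omega) (by omega)
  have key := S_eval_mul_recurrence hx j N
  refine (mul_pos_iff_of_pos_left hsN).1 ?_
  rw [key]
  positivity

end HeckeLambda

section ExtremalPoint

open Polynomial Polynomial.Chebyshev

variable {l : ℝ}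

def extremalPoint (l : ℝ) : ℝ := (3 * l + √(l ^ 2 + 4)) / 2

theorem extremalPoint_sq_sub (l : ℝ) :
    extremalPoint l ^ 2 - 3 * l * extremalPoint l + 2 * l ^ 2 - 1 = 0 := by
  have hD : √(l ^ 2 + 4) ^ 2 = l ^ 2 + 4 := sq_sqrt (by positivity)
  unfold extremalPoint
  linear_combination hD / 4

theorem two_mul_le_extremalPoint (l : ℝ) : 2 * l ≤ extremalPoint l := by
  have : l ≤ √(l ^ 2 + 4) := le_sqrt_of_sq_le (by linarith)
  unfold extremalPoint
  linarith

theorem extremalPoint_lt_three_mul (hl : 1 ≤ l) : extremalPoint l < 3 * l := by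
  have : √(l ^ 2 + 4) < 3 * l := (sqrt_lt' (by linarith)).2 (by nlinarith)
  unfold extremalPoint
  linarith

theorem mul_extremalPoint_lt (l : ℝ) : l * extremalPoint l < 2 * l ^ 2 + 1 := by
  have hD : √(l ^ 2 + 4) ^ 2 = l ^ 2 + 4 := sq_sqrt (by positivity)
  have : l * √(l ^ 2 + 4) < l ^ 2 + 2 := by
    nlinarith [sqrt_nonneg (l ^ 2 + 4), sq_nonneg (l * √(l ^ 2 + 4) - l ^ 2 - 2)]
  unfold extremalPoint
  linarith

theorem pq_extremalPoint_zero (hl : 1 ≤ l) : pq l (extremalPoint l) 0 = 3 :=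
  pq_eq_of_mem_Ico (by linarith)
    ⟨by rw [cq_zero]; push_cast; linarith [two_mul_le_extremalPoint l],
      by rw [cq_zero]; push_cast; exact extremalPoint_lt_three_mul hl⟩

/-- The denominators in `α_{n+1} = x_n / x_{n+1}`, normalised by `x_0 = 1`. -/
def extremalDenom (l : ℝ) (n : ℕ) : ℝ :=
  (S ℝ (n - 1)).eval l * (3 * l - extremalPoint l) - (S ℝ (n - 2)).eval l

theorem extremalDenom_add_two (l : ℝ) (n : ℕ) :
    extremalDenom l (n + 2) = l * extremalDenom l (n + 1) - extremalDenom l n := by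
  have h₁ := S_eval_add_two l ((n : ℤ) - 1)
  have h₂ := S_eval_add_two l ((n : ℤ) - 2)
  simp only [extremalDenom]
  push_cast
  ring_nf at h₁ h₂ ⊢
  linear_combination (3 * l - extremalPoint l) * h₁ - h₂

theorem cq_extremalPoint_one (hl : 1 ≤ l) :
    cq l (extremalPoint l) 1 = extremalDenom l 0 / extremalDenom l 1 := by
  rw [cq_succ, pq_extremalPoint_zero hl]
  simp [extremalDenom]

variable {p : ℕ}

theorem extremalDenom_heckeLambda_sub_two (hp : 2 ≤ p) :
    extremalDenom (heckeLambda p) (p - 2) =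
      2 * heckeLambda p ^ 2 + 1 - heckeLambda p * extremalPoint (heckeLambda p) := by
  rw [extremalDenom, Nat.cast_sub hp, show (p - (2 : ℕ) - 1 : ℤ) = p - 3 by push_cast; ring,
    show (p - (2 : ℕ) - 2 : ℤ) = p - 4 by push_cast; ring,
    S_eval_heckeLambda_sub_three hp, S_eval_heckeLambda_sub_four hp]
  ring

theorem extremalDenom_heckeLambda_sub_three (hp : 3 ≤ p) :
    extremalDenom (heckeLambda p) (p - 3) =
      extremalPoint (heckeLambda p) * extremalDenom (heckeLambda p) (p - 2) := by
  rw [extremalDenom_heckeLambda_sub_two (by omega), extremalDenom, Nat.cast_sub hp,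
    show (p - (3 : ℕ) - 1 : ℤ) = p - 4 by push_cast; ring,
    show (p - (3 : ℕ) - 2 : ℤ) = p - 5 by push_cast; ring,
    S_eval_heckeLambda_sub_four (by omega), S_eval_heckeLambda_sub_five (by omega)]
  linear_combination heckeLambda p * extremalPoint_sq_sub (heckeLambda p)

theorem extremalDenom_heckeLambda_pos (hp : 2 ≤ p) :
    ∀ n ≤ p - 2, 0 < extremalDenom (heckeLambda p) n :=
  recurrence_pos_of_heckeLambda (extremalDenom_add_two _) le_rfl
    (by simp [extremalDenom])
    (by rw [extremalDenom_heckeLambda_sub_two hp]; linarith [mul_extremalPoint_lt (heckeLambda p)])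

end ExtremalPoint

/-- `α = (3λ + √(λ² + 4))/2` has the purely periodic
`λ`-continued fraction with period `(3, 1, …, 1)` containing `p - 3` ones:
`r_0 = 3`, `r_j = 1` for `1 ≤ j ≤ p - 3`, and `α_{p-2} = α`. -/
theorem hecke_extremal_expansion (p : ℕ) (hp : 3 ≤ p) :
    pq (heckeLambda p)
        ((3 * heckeLambda p + Real.sqrt (heckeLambda p ^ 2 + 4)) / 2) 0 = 3 ∧
    (∀ j : ℕ, 1 ≤ j → j ≤ p - 3 →
      pq (heckeLambda p)
        ((3 * heckeLambda p + Real.sqrt (heckeLambda p ^ 2 + 4)) / 2) j = 1) ∧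
    cq (heckeLambda p)
        ((3 * heckeLambda p + Real.sqrt (heckeLambda p ^ 2 + 4)) / 2) (p - 2)
      = (3 * heckeLambda p + Real.sqrt (heckeLambda p ^ 2 + 4)) / 2 := by
  rw [show (3 * heckeLambda p + √(heckeLambda p ^ 2 + 4)) / 2 = extremalPoint (heckeLambda p)
    from rfl]
  have hl : 1 ≤ heckeLambda p := one_le_heckeLambda hp
  have hl₀ : 0 < heckeLambda p := by linarith
  have hpos := extremalDenom_heckeLambda_pos (by omega : 2 ≤ p)
  have h₁ := cq_extremalPoint_one hl
  refine ⟨pq_extremalPoint_zero hl, fun j hj₁ hj => ?_, ?_⟩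
  · obtain ⟨n, rfl⟩ := Nat.exists_eq_add_of_le hj₁
    exact pq_add_eq_one_of_recurrence hl₀ (extremalDenom_add_two _) hpos h₁ n (by omega)
  · have h := cq_add_eq_div_of_recurrence hl₀ (extremalDenom_add_two _) hpos h₁ (p - 3) (by omega)
    rwa [show 1 + (p - 3) = p - 2 by omega, show p - 3 + 1 = p - 2 by omega,
      extremalDenom_heckeLambda_sub_three hp, mul_div_cancel_right₀ _ (hpos _ le_rfl).ne'] at h
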